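/- arXiv:1202.6268 — 7 statements merged into one kernel-verified Lean document; each statement's English description precedes it below -/
import Mathlib

section
/- Let (A B) be an N×2N matrix of rank N over a field such that A·Bᵀ is symmetric. If A has rank r and the first r columns of A are linearly independent, then the N×N matrix formed by these r columns of A together with the last N−r columns of B is invertible. -/
/-!
Let `y` be in the left kernel of the mixed matrix. As `a₁, …, a_r` span the column space
of `A`, `yᵀ A = 0`. Symmetry of `A Bᵀ` then gives `A (Bᵀ y) = B (Aᵀ y) = 0`; since `Bᵀ y`
is supported on the first `r` coordinates, where the columns of `A` are independent,
`yᵀ B = 0`. So `y` is in the left kernel of `(A B)`, which is trivial because that matrix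
has rank `N`.
-/

open Matrix

namespace Matrix

section CommSemiring

variable {R m n : Type*} [CommSemiring R] [Fintype m]

theorem vecMul_ite_cols (p : n → Prop) [DecidablePred p] (A B : Matrix m n R) (y : m → R) :
    y ᵥ* (fun i j => if p j then A i j else B i j) =
      fun j => if p j then (y ᵥ* A) j else (y ᵥ* B) j := by
  funext j
  by_cases h : p j <;> simp [vecMul, dotProduct, h]

theorem mulVec_vecMul_eq_zero_of_isSymm [Fintype n] {A B : Matrix m n R}
    (hsym : (A * Bᵀ).IsSymm) {y : m → R} (hy : y ᵥ* A = 0) : A *ᵥ (y ᵥ* B) = 0 := by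
  have hBA : A * Bᵀ = B * Aᵀ := by
    rw [← hsym.eq, transpose_mul, transpose_transpose]
  rw [← mulVec_transpose, mulVec_mulVec, hBA, ← mulVec_mulVec, mulVec_transpose, hy,
    mulVec_zero]

end CommSemiring

section Field

variable {K m n ι : Type*} [Field K] [Fintype n] [Fintype ι]

theorem eq_zero_of_mulVec_eq_zero_of_support_subset {A : Matrix m n K} {e : ι → n}
    (hind : LinearIndependent K (A.col ∘ e)) {z : n → K} (hz : ∀ j ∉ Set.range e, z j = 0)
    (hAz : A *ᵥ z = 0) : z = 0 := by
  have hcomb : ∑ k, z (e k) • A.col (e k) = 0 := by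
    rw [← hAz, Fintype.sum_of_injective e hind.injective.of_comp _ (fun j => z j • A.col j)
      (fun j hj => by rw [hz j hj, zero_smul]) (fun _ => rfl)]
    funext i
    simp [mulVec, dotProduct, mul_comm]
  have hze := Fintype.linearIndependent_iff.mp hind _ hcomb
  funext j
  by_cases hj : j ∈ Set.range e
  · obtain ⟨k, rfl⟩ := hj
    exact hze k
  · exact hz j hj

variable [Fintype m]

theorem span_range_col_comp_eq_of_rank_eq {A : Matrix m n K} {e : ι → n}
    (hind : LinearIndependent K (A.col ∘ e)) (hA : A.rank = Fintype.card ι) :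
    Submodule.span K (Set.range (A.col ∘ e)) = Submodule.span K (Set.range A.col) :=
  Submodule.eq_of_le_of_finrank_le (Submodule.span_mono (Set.range_comp_subset_range e A.col))
    (by rw [finrank_span_eq_card hind, ← hA, rank_eq_finrank_span_cols])

theorem vecMul_eq_zero_of_forall_comp_eq_zero {A : Matrix m n K} {e : ι → n}
    (hind : LinearIndependent K (A.col ∘ e)) (hA : A.rank = Fintype.card ι) {y : m → K}
    (hy : ∀ k, (y ᵥ* A) (e k) = 0) : y ᵥ* A = 0 := by
  have hspan :
      Submodule.span K (Set.range (A.col ∘ e)) ≤ LinearMap.ker (dotProductBilin K K y) :=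
    Submodule.span_le.mpr (Set.range_subset_iff.mpr hy)
  rw [span_range_col_comp_eq_of_rank_eq hind hA] at hspan
  funext j
  exact hspan (Submodule.subset_span ⟨j, rfl⟩)

theorem eq_zero_of_vecMul_eq_zero_of_rank_eq [DecidableEq m] {A : Matrix m n K}
    (hA : A.rank = Fintype.card m) {y : m → K} (hy : y ᵥ* A = 0) : y = 0 := by
  have hrows : LinearIndependent K A.row := by
    rw [linearIndependent_iff_card_eq_finrank_span, Set.finrank, ← rank_eq_finrank_span_row, hA]
  exact vecMul_injective_iff.mpr hrows (hy.trans (zero_vecMul A).symm)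

end Field

end Matrix

theorem mixed_columns_invertible {K : Type*} [Field K] {N r : ℕ} (hr : r ≤ N)
    (A B : Matrix (Fin N) (Fin N) K)
    (hsym : (A * Bᵀ).IsSymm)
    (hrank : (Matrix.fromCols A B).rank = N)
    (hA : A.rank = r)
    (hind : LinearIndependent K (fun j : Fin r => fun i => A i (Fin.castLE hr j))) :
    IsUnit (Matrix.det (fun i j : Fin N => if (j : ℕ) < r then A i j else B i j)) := by
  refine isUnit_iff_ne_zero.mpr fun hdet => ?_
  obtain ⟨y, hy, hyM⟩ := exists_vecMul_eq_zero_iff.mpr hdet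
  rw [vecMul_ite_cols] at hyM
  have hyA : y ᵥ* A = 0 := by
    refine vecMul_eq_zero_of_forall_comp_eq_zero hind (by rw [hA, Fintype.card_fin]) fun k => ?_
    simpa [k.isLt] using congrFun hyM (Fin.castLE hr k)
  have hyB : y ᵥ* B = 0 := by
    refine eq_zero_of_mulVec_eq_zero_of_support_subset hind (fun j hj => ?_)
      (mulVec_vecMul_eq_zero_of_isSymm hsym hyA)
    have hjr : ¬ (j : ℕ) < r := fun h => hj ⟨⟨j, h⟩, rfl⟩
    simpa [hjr] using congrFun hyM j
  refine hy (eq_zero_of_vecMul_eq_zero_of_rank_eq (A := fromCols A B)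
    (by rwa [Fintype.card_fin]) ?_)
  rw [vecMul_fromCols, hyA, hyB]
  exact Sum.elim_zero_zero
end

section
/- Let (A B) be an N×2N matrix of rank N over a field with A·Bᵀ symmetric. Then there exists a subset S ⊆ {1,…,N} such that, after applying to the indices i ∈ S the column transformation (aᵢ, bᵢ) ↦ (bᵢ − aᵢ, −aᵢ), the resulting B-block is nondegenerate. That B-block is the N×N matrix obtained from B by replacing the i-th column bᵢ by −aᵢ for each i ∈ S. -/
open Matrix

theorem exists_quad_type_B_invertible {K : Type*} [Field K] {N : ℕ}
    (A B : Matrix (Fin N) (Fin N) K)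
    (hsym : (A * Bᵀ).IsSymm)
    (hrank : (Matrix.fromCols A B).rank = N) :
    ∃ S : Finset (Fin N),
      IsUnit (Matrix.det (fun i j : Fin N => if j ∈ S then -A i j else B i j)) := by
  classical
  -- `col j` is the `j`-th column of `B`
  set col : Fin N → (Fin N → K) := fun j i => B i j with hcoldef
  set P : Finset (Fin N) → Prop := fun T =>
    ∀ j, col j ∈ Submodule.span K (col '' (T : Set (Fin N))) with hPdef
  have hPuniv : P Finset.univ := fun j => Submodule.subset_span ⟨j, by simp, rfl⟩
  obtain ⟨T, hTmem, hTmin⟩ :=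
    Finset.exists_min_image (Finset.univ.filter P) Finset.card
      ⟨Finset.univ, Finset.mem_filter.mpr ⟨Finset.mem_univ _, hPuniv⟩⟩
  have hT : P T := (Finset.mem_filter.mp hTmem).2
  -- the columns of `B` indexed by `T` are linearly independent
  have hind : ∀ u : Fin N → K, (∀ j, j ∉ T → u j = 0) → B *ᵥ u = 0 → u = 0 := by
    intro u hsupp hBu
    by_contra hu
    obtain ⟨j0, hj0⟩ : ∃ j0, u j0 ≠ 0 := by
      by_contra h; push_neg at h; exact hu (funext h)
    have hj0T : j0 ∈ T := by by_contra h; exact hj0 (hsupp j0 h)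
    have hsumall : ∑ j, u j • col j = 0 := by
      funext i
      have h := congrFun hBu i
      simp only [Matrix.mulVec, dotProduct] at h
      simp only [Pi.zero_apply] at h
      simp only [Finset.sum_apply, Pi.smul_apply, smul_eq_mul, Pi.zero_apply, hcoldef]
      exact (Finset.sum_congr rfl fun j _ => mul_comm _ _).trans h
    have hsumT : ∑ j ∈ T, u j • col j = 0 := by
      rw [Finset.sum_subset (Finset.subset_univ T)
        (fun j _ hj => by simp [hsupp j hj])]
      exact hsumall
    rw [← Finset.add_sum_erase T _ hj0T] at hsumT
    have h1 : ∑ j ∈ T.erase j0, u j • col j ∈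
        Submodule.span K (col '' ((T.erase j0) : Set (Fin N))) :=
      Submodule.sum_mem _ fun j hj =>
        Submodule.smul_mem _ _ (Submodule.subset_span ⟨j, Finset.mem_coe.mpr hj, rfl⟩)
    have h2 : u j0 • col j0 = -∑ j ∈ T.erase j0, u j • col j :=
      eq_neg_of_add_eq_zero_left hsumT
    have h3 : u j0 • col j0 ∈
        Submodule.span K (col '' ((T.erase j0) : Set (Fin N))) := by
      rw [h2]; exact Submodule.neg_mem _ h1
    have hmem : col j0 ∈ Submodule.span K (col '' ((T.erase j0) : Set (Fin N))) := by
      have := Submodule.smul_mem _ (u j0)⁻¹ h3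
      rwa [smul_smul, inv_mul_cancel₀ hj0, one_smul] at this
    have hPerase : P (T.erase j0) := by
      intro j
      have hle : Submodule.span K (col '' (T : Set (Fin N))) ≤
          Submodule.span K (col '' ((T.erase j0) : Set (Fin N))) := by
        rw [Submodule.span_le]
        rintro x ⟨k, hk, rfl⟩
        rcases eq_or_ne k j0 with rfl | hne
        · exact hmem
        · exact Submodule.subset_span
            ⟨k, Finset.mem_coe.mpr (Finset.mem_erase.mpr ⟨hne, Finset.mem_coe.mp hk⟩), rfl⟩
      exact hle (hT j)
    have hcard := hTmin (T.erase j0)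
      (Finset.mem_filter.mpr ⟨Finset.mem_univ _, hPerase⟩)
    have hlt : (T.erase j0).card < T.card := Finset.card_erase_lt_of_mem hj0T
    omega
  -- take `S = Tᶜ`
  refine ⟨Tᶜ, ?_⟩
  rw [isUnit_iff_ne_zero]
  intro hdet
  obtain ⟨v, hv0, hv⟩ := Matrix.exists_vecMul_eq_zero_iff.mpr hdet
  have hvA : ∀ j, j ∉ T → (v ᵥ* A) j = 0 := by
    intro j hj
    have h := congrFun hv j
    have hjc : j ∈ Tᶜ := Finset.mem_compl.mpr hj
    simp only [Matrix.vecMul, dotProduct, hjc, if_pos, mul_neg,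
      Finset.sum_neg_distrib, neg_eq_zero, Pi.zero_apply] at h ⊢
    exact h
  have hvB : ∀ j, j ∈ T → (v ᵥ* B) j = 0 := by
    intro j hj
    have h := congrFun hv j
    have hjc : j ∉ Tᶜ := by simpa using hj
    simp only [Matrix.vecMul, dotProduct, hjc, if_neg, Pi.zero_apply] at h ⊢
    exact h
  -- `v` annihilates all columns of `B`
  have hvBall : v ᵥ* B = 0 := by
    let φ : (Fin N → K) →ₗ[K] K :=
      { toFun := fun w => ∑ i, v i * w i
        map_add' := fun x y => by simp [mul_add, Finset.sum_add_distrib]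
        map_smul' := fun c x => by simp [Finset.mul_sum, mul_left_comm] }
    have hφspan : Submodule.span K (col '' (T : Set (Fin N))) ≤ LinearMap.ker φ := by
      rw [Submodule.span_le]
      rintro x ⟨k, hk, rfl⟩
      have := hvB k (Finset.mem_coe.mp hk)
      simpa [φ, Matrix.vecMul, dotProduct, hcoldef] using this
    funext j
    have hker := hφspan (hT j)
    rw [LinearMap.mem_ker] at hker
    simpa [φ, Matrix.vecMul, dotProduct, hcoldef] using hker
  have hsym' : A * Bᵀ = B * Aᵀ := by
    have h := hsym
    rw [Matrix.IsSymm] at h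
    calc A * Bᵀ = (A * Bᵀ)ᵀ := h.symm
      _ = B * Aᵀ := by rw [Matrix.transpose_mul, Matrix.transpose_transpose]
  -- using symmetry, `v ᵥ* A` is in the kernel of `B`
  have hu : B *ᵥ (v ᵥ* A) = 0 := by
    have h1 : (v ᵥ* A) ᵥ* Bᵀ = (v ᵥ* B) ᵥ* Aᵀ := by
      rw [Matrix.vecMul_vecMul, Matrix.vecMul_vecMul, hsym']
    rw [hvBall, Matrix.zero_vecMul] at h1
    rw [← Matrix.mulVec_transpose] at h1
    simpa using h1
  have huzero : v ᵥ* A = 0 := hind _ hvA hu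
  -- so `v` annihilates the full matrix `(A B)`
  have hvM : v ᵥ* Matrix.fromCols A B = 0 := by
    rw [Matrix.vecMul_fromCols, huzero, hvBall]
    ext (j | j) <;> simp
  -- rank N means trivial left kernel
  have hrank' : ((Matrix.fromCols A B)ᵀ).rank = N := by
    rw [Matrix.rank_transpose]; exact hrank
  set f := ((Matrix.fromCols A B)ᵀ).mulVecLin with hfdef
  have hkerbot : LinearMap.ker f = ⊥ := by
    have h1 := LinearMap.finrank_range_add_finrank_ker f
    have h2 : Module.finrank K (LinearMap.range f) = N := hrank'
    have h3 : Module.finrank K (Fin N → K) = N := by simp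
    have h4 : Module.finrank K (LinearMap.ker f) = 0 := by omega
    exact Submodule.finrank_eq_zero.mp h4
  have hvmem : v ∈ LinearMap.ker f := by
    rw [LinearMap.mem_ker, hfdef, Matrix.mulVecLin_apply, Matrix.mulVec_transpose]
    exact hvM
  rw [hkerbot, Submodule.mem_bot] at hvmem
  exact hv0 hvmem
end

section
/- Suppose A, B are N×N integer matrices with B invertible over ℚ and B⁻¹A symmetric, and η ∈ ℤ^N. If (f, f'') and (g, g'') are two integer vector pairs in ℤ^N × ℤ^N satisfying A·f + B·f'' = η and A·g + B·g'' = η, then exp(iπ(f''·g − f·g'')) = ±1, and consequently for any Z, Z'' ∈ ℂ^N with A·Z + B·Z'' = iπ·η one has exp(Z·f'' − Z''·f) = ± exp(Z·g'' − Z''·g). -/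
open Matrix Complex

theorem flattening_monomial_sign {N : ℕ}
    (A B : Matrix (Fin N) (Fin N) ℤ) (η f f'' g g'' : Fin N → ℤ)
    (hB : (B.map (Int.cast : ℤ → ℚ)).det ≠ 0)
    (hsym : ((B.map (Int.cast : ℤ → ℚ))⁻¹ * A.map (Int.cast : ℤ → ℚ)).IsSymm)
    (hf : A.mulVec f + B.mulVec f'' = η)
    (hg : A.mulVec g + B.mulVec g'' = η) :
    (Complex.exp (Real.pi * Complex.I *
        ((∑ i, (f'' i : ℂ) * g i) - ∑ i, (f i : ℂ) * g'' i)) = 1 ∨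
     Complex.exp (Real.pi * Complex.I *
        ((∑ i, (f'' i : ℂ) * g i) - ∑ i, (f i : ℂ) * g'' i)) = -1) ∧
    ∀ Z Z'' : Fin N → ℂ,
      ((A.map (Int.cast : ℤ → ℂ)).mulVec Z + (B.map (Int.cast : ℤ → ℂ)).mulVec Z''
        = fun i => Real.pi * Complex.I * η i) →
      (Complex.exp ((∑ i, Z i * f'' i) - ∑ i, Z'' i * f i)
          = Complex.exp ((∑ i, Z i * g'' i) - ∑ i, Z'' i * g i) ∨
       Complex.exp ((∑ i, Z i * f'' i) - ∑ i, Z'' i * f i)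
          = -Complex.exp ((∑ i, Z i * g'' i) - ∑ i, Z'' i * g i)) := by
  classical
  set n : ℤ := (∑ i, f'' i * g i) - ∑ i, f i * g'' i with hn
  have hcast : ((∑ i, (f'' i : ℂ) * g i) - ∑ i, (f i : ℂ) * g'' i) = (n : ℂ) := by
    push_cast [hn]; ring
  have hεval : Complex.exp (Real.pi * Complex.I * (n : ℂ)) = (-1 : ℂ) ^ n := by
    rw [show (Real.pi : ℂ) * Complex.I * (n : ℂ) = (n : ℂ) * (Real.pi * Complex.I) by ring,
      Complex.exp_int_mul, Complex.exp_pi_mul_I]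
  have hsign : Complex.exp (Real.pi * Complex.I * (n : ℂ)) = 1 ∨
      Complex.exp (Real.pi * Complex.I * (n : ℂ)) = -1 := by
    rcases Int.even_or_odd n with h | h
    · left; rw [hεval, h.neg_one_zpow]
    · right; rw [hεval, h.neg_one_zpow]
  refine ⟨by rw [hcast]; exact hsign, ?_⟩
  -- Now the main part.
  -- determinants
  have hBdetQ : ((B.det : ℚ)) ≠ 0 := by
    rwa [show ((B.det : ℚ)) = (B.map (Int.cast : ℤ → ℚ)).det from
      RingHom.map_det (Int.castRingHom ℚ) B]
  have hBdetZ : B.det ≠ 0 := by exact_mod_cast hBdetQ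
  set A' : Matrix (Fin N) (Fin N) ℂ := A.map (Int.cast : ℤ → ℂ) with hA'
  set B' : Matrix (Fin N) (Fin N) ℂ := B.map (Int.cast : ℤ → ℂ) with hB'
  have hBdetC : B'.det ≠ 0 := by
    rw [hB', show ((B.map (Int.cast : ℤ → ℂ)).det) = ((B.det : ℂ)) from
      (RingHom.map_det (Int.castRingHom ℂ) B).symm]
    exact_mod_cast hBdetZ
  have hBunit : IsUnit B'.det := isUnit_iff_ne_zero.mpr hBdetC
  have hBtunit : IsUnit B'ᵀ.det := by rwa [Matrix.det_transpose]
  -- symmetry over ℤ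
  have hsymZ : B * Aᵀ = A * Bᵀ := by
    set Aq : Matrix (Fin N) (Fin N) ℚ := A.map (Int.cast : ℤ → ℚ) with hAq
    set Bq : Matrix (Fin N) (Fin N) ℚ := B.map (Int.cast : ℤ → ℚ) with hBq
    have hBqunit : IsUnit Bq.det := isUnit_iff_ne_zero.mpr hB
    have hBqtunit : IsUnit Bqᵀ.det := by rwa [Matrix.det_transpose]
    have h1 : Aqᵀ * (Bqᵀ)⁻¹ = Bq⁻¹ * Aq := by
      have := hsym
      rw [Matrix.IsSymm] at this
      calc Aqᵀ * (Bqᵀ)⁻¹ = Aqᵀ * (Bq⁻¹)ᵀ := by rw [Matrix.transpose_nonsing_inv]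
        _ = (Bq⁻¹ * Aq)ᵀ := by rw [Matrix.transpose_mul]
        _ = Bq⁻¹ * Aq := this
    have h2 : Bq * Aqᵀ = Aq * Bqᵀ := by
      calc Bq * Aqᵀ = Bq * (Aqᵀ * ((Bqᵀ)⁻¹ * Bqᵀ)) := by
            rw [Matrix.nonsing_inv_mul _ hBqtunit, mul_one]
        _ = Bq * (Aqᵀ * (Bqᵀ)⁻¹) * Bqᵀ := by simp only [← mul_assoc]
        _ = Bq * (Bq⁻¹ * Aq) * Bqᵀ := by rw [h1]
        _ = (Bq * Bq⁻¹) * Aq * Bqᵀ := by simp only [← mul_assoc]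
        _ = Aq * Bqᵀ := by rw [Matrix.mul_nonsing_inv _ hBqunit, one_mul]
    ext i j
    have h3 := congrFun (congrFun h2 i) j
    simp only [hAq, hBq, Matrix.mul_apply, Matrix.transpose_apply, Matrix.map_apply] at h3
    exact_mod_cast h3
  have hsymC : B' * A'ᵀ = A' * B'ᵀ := by
    ext i j
    have h3 := congrFun (congrFun hsymZ i) j
    simp only [hA', hB', Matrix.mul_apply, Matrix.transpose_apply, Matrix.map_apply]
    exact_mod_cast h3
  -- casting integer linear relations to ℂ
  have hmapvec : ∀ (M : Matrix (Fin N) (Fin N) ℤ) (v : Fin N → ℤ),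
      (M.map (Int.cast : ℤ → ℂ)).mulVec (fun i => (v i : ℂ)) =
        fun i => ((M.mulVec v i : ℤ) : ℂ) := by
    intro M v
    funext i
    exact (RingHom.map_mulVec (Int.castRingHom ℂ) M v i).symm
  intro Z Z'' hZ
  set u : Fin N → ℂ := fun i => ((f i - g i : ℤ) : ℂ) with hu
  set u'' : Fin N → ℂ := fun i => ((f'' i - g'' i : ℤ) : ℂ) with hu''
  have hfC : A'.mulVec (fun i => (f i : ℂ)) + B'.mulVec (fun i => (f'' i : ℂ))
      = fun i => (η i : ℂ) := by
    rw [hA', hB', hmapvec, hmapvec]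
    funext i
    have := congrFun hf i
    simp only [Pi.add_apply] at this ⊢
    exact_mod_cast this
  have hgC : A'.mulVec (fun i => (g i : ℂ)) + B'.mulVec (fun i => (g'' i : ℂ))
      = fun i => (η i : ℂ) := by
    rw [hA', hB', hmapvec, hmapvec]
    funext i
    have := congrFun hg i
    simp only [Pi.add_apply] at this ⊢
    exact_mod_cast this
  have huvec : (fun i => (f i : ℂ)) - (fun i => (g i : ℂ)) = u := by
    funext i; simp [hu]
  have huvec'' : (fun i => (f'' i : ℂ)) - (fun i => (g'' i : ℂ)) = u'' := by
    funext i; simp [hu'']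
  have hrel : A'.mulVec u + B'.mulVec u'' = 0 := by
    rw [← huvec, ← huvec'', Matrix.mulVec_sub, Matrix.mulVec_sub]
    have := sub_eq_zero_of_eq (hfC.trans hgC.symm)
    rw [← this]; abel
  set w : Fin N → ℂ := (B'ᵀ)⁻¹.mulVec u with hw
  have hBtw : B'ᵀ.mulVec w = u := by
    rw [hw, Matrix.mulVec_mulVec, Matrix.mul_nonsing_inv _ hBtunit, Matrix.one_mulVec]
  have hAtw : A'ᵀ.mulVec w = -u'' := by
    have h1 : B'.mulVec (A'ᵀ.mulVec w) = B'.mulVec (-u'') := by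
      rw [Matrix.mulVec_mulVec, hsymC, ← Matrix.mulVec_mulVec, hBtw]
      have h2 : A'.mulVec u = -(B'.mulVec u'') := by
        rw [eq_neg_iff_add_eq_zero]; exact hrel
      rw [h2, Matrix.mulVec_neg]
    have hinj : Function.Injective B'.mulVec :=
      Matrix.mulVec_injective_iff_isUnit.mpr ((Matrix.isUnit_iff_isUnit_det B').mpr hBunit)
    exact hinj h1
  -- dot product helper
  have hswap : ∀ (M : Matrix (Fin N) (Fin N) ℂ) (v w' : Fin N → ℂ),
      (M.mulVec v) ⬝ᵥ w' = v ⬝ᵥ (Mᵀ.mulVec w') := by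
    intro M v w'
    rw [Matrix.dotProduct_mulVec, Matrix.vecMul_transpose]
  have hZu'' : Z ⬝ᵥ u'' = -(A'.mulVec Z ⬝ᵥ w) := by
    rw [hswap, hAtw, dotProduct_neg, neg_neg]
  have hZ''u : Z'' ⬝ᵥ u = B'.mulVec Z'' ⬝ᵥ w := by
    rw [hswap, hBtw]
  have hηw : (fun i => (η i : ℂ)) ⬝ᵥ w = -(n : ℂ) := by
    have e1 : A'.mulVec (fun i => (f i : ℂ)) ⬝ᵥ w = (fun i => (f i : ℂ)) ⬝ᵥ (-u'') := by
      rw [hswap, hAtw]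
    have e2 : B'.mulVec (fun i => (f'' i : ℂ)) ⬝ᵥ w = (fun i => (f'' i : ℂ)) ⬝ᵥ u := by
      rw [hswap, hBtw]
    rw [← hfC, add_dotProduct, e1, e2]
    have hrhs : -(n : ℂ) = ∑ i, (((f i : ℂ)) * g'' i - ((f'' i : ℂ)) * g i) := by
      rw [hn]
      push_cast [Finset.sum_sub_distrib]
      ring
    rw [hrhs]
    simp only [dotProduct, Pi.neg_apply, hu, hu'']
    rw [← Finset.sum_add_distrib]
    refine Finset.sum_congr rfl fun i _ => ?_
    push_cast
    ring
  have hkey : (∑ i, Z i * u'' i) - ∑ i, Z'' i * u i = Real.pi * Complex.I * (n : ℂ) := by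
    have hD : Z ⬝ᵥ u'' - Z'' ⬝ᵥ u = -((A'.mulVec Z + B'.mulVec Z'') ⬝ᵥ w) := by
      rw [hZu'', hZ''u, add_dotProduct]; ring
    rw [hZ] at hD
    have h2 : (fun i => (Real.pi : ℂ) * Complex.I * (η i : ℂ)) ⬝ᵥ w
        = Real.pi * Complex.I * ((fun i => (η i : ℂ)) ⬝ᵥ w) := by
      simp [dotProduct, Finset.mul_sum, mul_assoc]
    rw [h2, hηw] at hD
    have h3 : Z ⬝ᵥ u'' - Z'' ⬝ᵥ u = Real.pi * Complex.I * (n : ℂ) := by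
      rw [hD]; ring
    simpa [dotProduct] using h3
  -- conclude
  have hsplit : ((∑ i, Z i * f'' i) - ∑ i, Z'' i * f i)
      = ((∑ i, Z i * g'' i) - ∑ i, Z'' i * g i) + Real.pi * Complex.I * (n : ℂ) := by
    rw [← hkey]
    simp only [hu, hu'']
    push_cast
    rw [Finset.sum_congr rfl (fun i _ => mul_sub (Z i) ((f'' i : ℂ)) ((g'' i : ℂ))),
      Finset.sum_congr rfl (fun i _ => mul_sub (Z'' i) ((f i : ℂ)) ((g i : ℂ))),
      Finset.sum_sub_distrib, Finset.sum_sub_distrib]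
    ring
  rw [hsplit, Complex.exp_add]
  rcases hsign with h | h
  · left; rw [h, mul_one]
  · right; rw [h]; ring
end

section
/- Let m, ℓ be nonzero complex numbers with m⁴ − (1 − m² − 2m⁴ − m⁶ + m⁸)ℓ + m⁴ℓ² = 0 and m⁴ ≠ 1, 1 + m²ℓ ≠ 0, m² + ℓ ≠ 0. Define z = −(m² − m⁻²)/(1 + m²ℓ) and w = (m² + ℓ)/(m² − m⁻²). Then z and w satisfy the deformed gluing equations z²w²z''w'' = 1 and z·w·z'' = −m², where z'' = 1 − z⁻¹ and w'' = 1 − w⁻¹, together with z⁻²·z''⁻¹ = ℓ. -/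
/-!
Write `M = m²`. Clearing denominators, each of the three relations
`w (z - 1) = -M`, `ℓ z (z - 1) = 1` and `w (w - 1) = ℓ` becomes a multiple of the A-polynomial.
Since `z z'' = z - 1`, the second gluing equation is the first relation, the longitude equation is
the second, and the first gluing equation `z (z - 1) · w (w - 1) = 1` is the product of the last two.
-/

theorem gluing_of_shape_relations {K : Type*} [Field K] {z w ℓ μ : K}
    (hzw : w * (z - 1) = -μ) (hzℓ : ℓ * (z * (z - 1)) = 1) (hwℓ : w * (w - 1) = ℓ) :
    z ^ 2 * w ^ 2 * (1 - z⁻¹) * (1 - w⁻¹) = 1 ∧ z * w * (1 - z⁻¹) = -μ ∧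
      z⁻¹ ^ 2 * (1 - z⁻¹)⁻¹ = ℓ := by
  obtain ⟨hz₀, hz₁⟩ := mul_ne_zero_iff.mp (right_ne_zero_of_mul_eq_one hzℓ)
  have hw₀ : w ≠ 0 := left_ne_zero_of_mul (hwℓ ▸ left_ne_zero_of_mul_eq_one hzℓ)
  refine ⟨?_, ?_, ?_⟩
  · field_simp
    linear_combination z * (z - 1) * hwℓ + hzℓ
  · field_simp
    exact hzw
  · field_simp
    linear_combination -hzℓ

section FigureEight

variable {K : Type*} [Field K]

/-- The A-polynomial of the figure-eight knot, in the variables `M = m²` and `ℓ`. -/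
def fig8APoly (M ℓ : K) : K :=
  M ^ 2 - (1 - M - 2 * M ^ 2 - M ^ 3 + M ^ 4) * ℓ + M ^ 2 * ℓ ^ 2

def fig8ShapeZ (M ℓ : K) : K := -(M - M⁻¹) / (1 + M * ℓ)

def fig8ShapeW (M ℓ : K) : K := (M + ℓ) / (M - M⁻¹)

theorem sub_inv_ne_zero_of_sq_ne_one {M : K} (hM : M ≠ 0) (hM2 : M ^ 2 ≠ 1) : M - M⁻¹ ≠ 0 := by
  rw [sub_ne_zero]
  contrapose! hM2
  field_simp at hM2
  exact hM2

theorem fig8ShapeW_mul_fig8ShapeZ_sub_one {M ℓ : K} (hM : M ≠ 0) (hM2 : M ^ 2 ≠ 1)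
    (h1 : 1 + M * ℓ ≠ 0) (hA : fig8APoly M ℓ = 0) :
    fig8ShapeW M ℓ * (fig8ShapeZ M ℓ - 1) = -M := by
  have := sub_inv_ne_zero_of_sq_ne_one hM hM2
  rw [fig8APoly] at hA
  rw [fig8ShapeW, fig8ShapeZ]
  field_simp
  linear_combination -hA

theorem mul_fig8ShapeZ_mul_sub_one {M ℓ : K} (hM : M ≠ 0) (h1 : 1 + M * ℓ ≠ 0)
    (hA : fig8APoly M ℓ = 0) :
    ℓ * (fig8ShapeZ M ℓ * (fig8ShapeZ M ℓ - 1)) = 1 := by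
  rw [fig8APoly] at hA
  rw [fig8ShapeZ]
  rw [mul_comm M ℓ] at h1 ⊢
  field_simp
  linear_combination -hA

theorem fig8ShapeW_mul_sub_one {M ℓ : K} (hM : M ≠ 0) (hM2 : M ^ 2 ≠ 1)
    (hA : fig8APoly M ℓ = 0) :
    fig8ShapeW M ℓ * (fig8ShapeW M ℓ - 1) = ℓ := by
  have := sub_inv_ne_zero_of_sq_ne_one hM hM2
  rw [fig8APoly] at hA
  rw [fig8ShapeW]
  field_simp
  linear_combination hA

end FigureEight

theorem fig8_deformed_gluing_general (m ℓ : ℂ) (hm : m ≠ 0)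
    (hA : m ^ 4 - (1 - m ^ 2 - 2 * m ^ 4 - m ^ 6 + m ^ 8) * ℓ + m ^ 4 * ℓ ^ 2 = 0)
    (hm4 : m ^ 4 ≠ 1) (h1 : 1 + m ^ 2 * ℓ ≠ 0) :
    let z : ℂ := -(m ^ 2 - m⁻¹ ^ 2) / (1 + m ^ 2 * ℓ)
    let w : ℂ := (m ^ 2 + ℓ) / (m ^ 2 - m⁻¹ ^ 2)
    let z'' : ℂ := 1 - z⁻¹
    let w'' : ℂ := 1 - w⁻¹
    z ^ 2 * w ^ 2 * z'' * w'' = 1 ∧ z * w * z'' = -m ^ 2 ∧ z⁻¹ ^ 2 * z''⁻¹ = ℓ := by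
  have hM : m ^ 2 ≠ 0 := pow_ne_zero 2 hm
  have hM2 : (m ^ 2) ^ 2 ≠ 1 := by rwa [← pow_mul]
  have hA' : fig8APoly (m ^ 2) ℓ = 0 := by rw [fig8APoly, ← hA]; ring
  have hglue := gluing_of_shape_relations
    (fig8ShapeW_mul_fig8ShapeZ_sub_one hM hM2 h1 hA')
    (mul_fig8ShapeZ_mul_sub_one hM h1 hA')
    (fig8ShapeW_mul_sub_one hM hM2 hA')
  rw [fig8ShapeZ, fig8ShapeW, ← inv_pow] at hglue
  exact hglue

theorem fig8_deformed_gluing (m ℓ : ℂ) (hm : m ≠ 0) (hl : ℓ ≠ 0)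
    (hA : m ^ 4 - (1 - m ^ 2 - 2 * m ^ 4 - m ^ 6 + m ^ 8) * ℓ + m ^ 4 * ℓ ^ 2 = 0)
    (hm4 : m ^ 4 ≠ 1) (h1 : 1 + m ^ 2 * ℓ ≠ 0) (h2 : m ^ 2 + ℓ ≠ 0) :
    let z : ℂ := -(m ^ 2 - m⁻¹ ^ 2) / (1 + m ^ 2 * ℓ)
    let w : ℂ := (m ^ 2 + ℓ) / (m ^ 2 - m⁻¹ ^ 2)
    let z'' : ℂ := 1 - z⁻¹
    let w'' : ℂ := 1 - w⁻¹
    z ^ 2 * w ^ 2 * z'' * w'' = 1 ∧ z * w * z'' = -m ^ 2 ∧ z⁻¹ ^ 2 * z''⁻¹ = ℓ :=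
  fig8_deformed_gluing_general m ℓ hm hA hm4 h1
end

section
/- Let m, ℓ be nonzero complex numbers on the figure-eight geometric A-polynomial curve (satisfying m⁴ − (1 − m² − 2m⁴ − m⁶ + m⁸)ℓ + m⁴ℓ² = 0, with the nondegeneracy conditions m⁴ ≠ 1, 1 + m²ℓ ≠ 0, m² + ℓ ≠ 0), and set z = −(m² − m⁻²)/(1 + m²ℓ), w = (m² + ℓ)/(m² − m⁻²), z'' = 1 − z⁻¹, w'' = 1 − w⁻¹. Then (1/2)·(z''·w'' − 1)·z·w = (1 − m² − 2m⁴ − m⁶ + m⁸ − 2m⁴ℓ) / (2m⁴(m² − m⁻²)). -/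
/-! Since `(1 - z⁻¹) z = z - 1`, the torsion `(z'' w'' - 1) z w / 2` collapses to `(1 - z - w) / 2`,
and after clearing denominators `1 - z - w` differs from the right-hand side by `m²` times the
A-polynomial of the figure-eight knot. -/

section Field

variable {K : Type*} [Field K]

theorem one_sub_inv_mul_one_sub_inv_sub_one_mul {z w : K} (hz : z ≠ 0) (hw : w ≠ 0) :
    ((1 - z⁻¹) * (1 - w⁻¹) - 1) * z * w = 1 - z - w := by
  field_simp
  ring

theorem sq_sub_inv_sq_eq {m : K} (hm : m ≠ 0) : m ^ 2 - m⁻¹ ^ 2 = (m ^ 4 - 1) / m ^ 2 := by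
  field_simp

theorem sq_sub_inv_sq_ne_zero {m : K} (hm : m ≠ 0) (hm4 : m ^ 4 ≠ 1) : m ^ 2 - m⁻¹ ^ 2 ≠ 0 := by
  rw [sq_sub_inv_sq_eq hm]
  exact div_ne_zero (sub_ne_zero.mpr hm4) (pow_ne_zero 2 hm)

theorem one_sub_fig8_shapes_of_aPolynomial {m ℓ : K} (hm : m ≠ 0)
    (hA : m ^ 4 - (1 - m ^ 2 - 2 * m ^ 4 - m ^ 6 + m ^ 8) * ℓ + m ^ 4 * ℓ ^ 2 = 0)
    (hm4 : m ^ 4 ≠ 1) (h1 : 1 + m ^ 2 * ℓ ≠ 0) :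
    1 - -(m ^ 2 - m⁻¹ ^ 2) / (1 + m ^ 2 * ℓ) - (m ^ 2 + ℓ) / (m ^ 2 - m⁻¹ ^ 2)
      = (1 - m ^ 2 - 2 * m ^ 4 - m ^ 6 + m ^ 8 - 2 * m ^ 4 * ℓ)
        / (m ^ 4 * (m ^ 2 - m⁻¹ ^ 2)) := by
  rw [sq_sub_inv_sq_eq hm]
  field_simp
  linear_combination m ^ 2 * hA

end Field

theorem fig8_torsion_on_curve_general (m ℓ : ℂ) (hm : m ≠ 0)
    (hA : m ^ 4 - (1 - m ^ 2 - 2 * m ^ 4 - m ^ 6 + m ^ 8) * ℓ + m ^ 4 * ℓ ^ 2 = 0)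
    (hm4 : m ^ 4 ≠ 1) (h1 : 1 + m ^ 2 * ℓ ≠ 0) (h2 : m ^ 2 + ℓ ≠ 0) :
    let z : ℂ := -(m ^ 2 - m⁻¹ ^ 2) / (1 + m ^ 2 * ℓ)
    let w : ℂ := (m ^ 2 + ℓ) / (m ^ 2 - m⁻¹ ^ 2)
    let z'' : ℂ := 1 - z⁻¹
    let w'' : ℂ := 1 - w⁻¹
    (1 / 2) * (z'' * w'' - 1) * z * w
      = (1 - m ^ 2 - 2 * m ^ 4 - m ^ 6 + m ^ 8 - 2 * m ^ 4 * ℓ)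
        / (2 * m ^ 4 * (m ^ 2 - m⁻¹ ^ 2)) := by
  intro z w z'' w''
  have hD := sq_sub_inv_sq_ne_zero hm hm4
  have hz : z ≠ 0 := div_ne_zero (neg_ne_zero.mpr hD) h1
  have hw : w ≠ 0 := div_ne_zero h2 hD
  calc (1 / 2) * (z'' * w'' - 1) * z * w = (1 / 2) * (1 - z - w) := by
        rw [← one_sub_inv_mul_one_sub_inv_sub_one_mul hz hw]
        ring
    _ = _ := by
        rw [one_sub_fig8_shapes_of_aPolynomial hm hA hm4 h1, one_div_mul_eq_div, div_div]
        congr 1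
        ring

theorem fig8_torsion_on_curve (m ℓ : ℂ) (hm : m ≠ 0) (hl : ℓ ≠ 0)
    (hA : m ^ 4 - (1 - m ^ 2 - 2 * m ^ 4 - m ^ 6 + m ^ 8) * ℓ + m ^ 4 * ℓ ^ 2 = 0)
    (hm4 : m ^ 4 ≠ 1) (h1 : 1 + m ^ 2 * ℓ ≠ 0) (h2 : m ^ 2 + ℓ ≠ 0) :
    let z : ℂ := -(m ^ 2 - m⁻¹ ^ 2) / (1 + m ^ 2 * ℓ)
    let w : ℂ := (m ^ 2 + ℓ) / (m ^ 2 - m⁻¹ ^ 2)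
    let z'' : ℂ := 1 - z⁻¹
    let w'' : ℂ := 1 - w⁻¹
    (1 / 2) * (z'' * w'' - 1) * z * w
      = (1 - m ^ 2 - 2 * m ^ 4 - m ^ 6 + m ^ 8 - 2 * m ^ 4 * ℓ)
        / (2 * m ^ 4 * (m ^ 2 - m⁻¹ ^ 2)) :=
  fig8_torsion_on_curve_general m ℓ hm hA hm4 h1 h2
end

section
/- Let z₁ ∈ ℂ\{0,1\} with z₁' = 1/(1−z₁), z₁'' = 1−z₁⁻¹, and let A = (a₁, a₂, …, a_N), B = (b₁, …, b_N) be N×N complex matrices given by their columns. Define Ã = (−b₁, a₂, …, a_N) and B̃ = (a₁−b₁, b₂, …, b_N), and set z̃ = (z₁', z₂, …, z_N), z̃'' = (z₁, z₂'', …, z_N'') where zᵢ'' = 1−zᵢ⁻¹ for all i. Then det(Ã·Δ_{z̃''} + B̃·Δ_{z̃}⁻¹) = −z₁ · det(A·Δ_{z''} + B·Δ_z⁻¹), where Δ_v denotes the diagonal matrix with entries v. -/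
/-!
Write `M = A Δ_{z''} + B Δ_z⁻¹`. Only the first columns change, and the new first column is
`-b₁ z₁ + (a₁ - b₁)(1 - z₁) = -z₁ (a₁ z₁'' + b₁ z₁⁻¹)`, i.e. `-z₁` times the first column of `M`.
The determinant is linear in that column.
-/

open Matrix

namespace Matrix

variable {n R : Type*} [DecidableEq n] [Fintype n] [NonUnitalNonAssocSemiring R]

theorem updateCol_mul_diagonal_update_add_updateCol_mul_diagonal_update
    (A B : Matrix n n R) (d e : n → R) (j : n) (a b : n → R) (x y : R) :
    A.updateCol j a * diagonal (Function.update d j x)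
        + B.updateCol j b * diagonal (Function.update e j y)
      = (A * diagonal d + B * diagonal e).updateCol j (fun i => a i * x + b i * y) := by
  ext i k
  by_cases hk : k = j
  · subst hk
    simp
  · simp [hk]

end Matrix

theorem det_change_of_quad_general {N : ℕ}
    (A B : Matrix (Fin (N + 1)) (Fin (N + 1)) ℂ)
    (z : Fin (N + 1) → ℂ) (hz0 : z 0 ≠ 0) :
    let z'' : Fin (N + 1) → ℂ := fun i => 1 - (z i)⁻¹
    let Atil : Matrix (Fin (N + 1)) (Fin (N + 1)) ℂ :=
      A.updateCol 0 (fun i => -B i 0)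
    let Btil : Matrix (Fin (N + 1)) (Fin (N + 1)) ℂ :=
      B.updateCol 0 (fun i => A i 0 - B i 0)
    let ztil : Fin (N + 1) → ℂ := Function.update z 0 ((1 - z 0)⁻¹)
    let ztil'' : Fin (N + 1) → ℂ := Function.update z'' 0 (z 0)
    Matrix.det (Atil * Matrix.diagonal ztil''
        + Btil * Matrix.diagonal (fun i => (ztil i)⁻¹))
      = -z 0 * Matrix.det (A * Matrix.diagonal z''
        + B * Matrix.diagonal (fun i => (z i)⁻¹)) := by
  intro z'' Atil Btil ztil ztil''
  set M := A * diagonal z'' + B * diagonal (fun i => (z i)⁻¹)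
  have hztil_inv : (fun i => (ztil i)⁻¹) = Function.update (fun i => (z i)⁻¹) 0 (1 - z 0) := by
    rw [← inv_inv (1 - z 0)]
    exact Function.comp_update Inv.inv z 0 _
  have hcol : (fun i => -B i 0 * z 0 + (A i 0 - B i 0) * (1 - z 0)) = (-z 0) • fun i => M i 0 := by
    funext i
    simp only [M, z'', Pi.smul_apply, smul_eq_mul, Matrix.add_apply, mul_diagonal]
    field_simp
    ring
  rw [hztil_inv, updateCol_mul_diagonal_update_add_updateCol_mul_diagonal_update, hcol,
    det_updateCol_smul, updateCol_eq_self]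

theorem det_change_of_quad {N : ℕ}
    (A B : Matrix (Fin (N + 1)) (Fin (N + 1)) ℂ)
    (z : Fin (N + 1) → ℂ) (hz0 : z 0 ≠ 0) (hz1 : z 0 ≠ 1) :
    let z'' : Fin (N + 1) → ℂ := fun i => 1 - (z i)⁻¹
    let Atil : Matrix (Fin (N + 1)) (Fin (N + 1)) ℂ :=
      A.updateCol 0 (fun i => -B i 0)
    let Btil : Matrix (Fin (N + 1)) (Fin (N + 1)) ℂ :=
      B.updateCol 0 (fun i => A i 0 - B i 0)
    let ztil : Fin (N + 1) → ℂ := Function.update z 0 ((1 - z 0)⁻¹)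
    let ztil'' : Fin (N + 1) → ℂ := Function.update z'' 0 (z 0)
    Matrix.det (Atil * Matrix.diagonal ztil''
        + Btil * Matrix.diagonal (fun i => (ztil i)⁻¹))
      = -z 0 * Matrix.det (A * Matrix.diagonal z''
        + B * Matrix.diagonal (fun i => (z i)⁻¹)) :=
  det_change_of_quad_general A B z hz0
end

section
/- Suppose A, B, C, D are N×N rational matrices forming a symplectic matrix [[A,B],[C,D]], with B invertible. Let u ∈ ℚ^N, η ∈ ℤ^N, and suppose (f, f'') and (g, g'') are two solutions in ℚ^N × ℚ^N of the system A x + B y = η together with the single additional linear equation c·x + d·y = η_λ, where (c, d) is the N-th row of (C, D) and η_λ ∈ ℚ. If u = (0,…,0,u_N)ᵀ is supported in the last coordinate, then (B⁻¹u)·(f − g) = 0. -/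
open Matrix

theorem generalized_flattening_u_term {N : ℕ}
    (A B C D : Matrix (Fin (N + 1)) (Fin (N + 1)) ℚ)
    (hsymp : (Matrix.fromBlocks A B C D)ᵀ
        * Matrix.fromBlocks 0 1 (-1) 0 * Matrix.fromBlocks A B C D
      = Matrix.fromBlocks 0 1 (-1) 0)
    (hB : IsUnit B.det)
    (u : Fin (N + 1) → ℚ) (hu : ∀ i, i ≠ Fin.last N → u i = 0)
    (η : Fin (N + 1) → ℤ) (ηL : ℚ)
    (f f'' g g'' : Fin (N + 1) → ℚ)
    (hf : A.mulVec f + B.mulVec f'' = fun i => (η i : ℚ))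
    (hg : A.mulVec g + B.mulVec g'' = fun i => (η i : ℚ))
    (hfl : (∑ i, C (Fin.last N) i * f i) + ∑ i, D (Fin.last N) i * f'' i = ηL)
    (hgl : (∑ i, C (Fin.last N) i * g i) + ∑ i, D (Fin.last N) i * g'' i = ηL) :
    ∑ i, (B⁻¹.mulVec u) i * (f i - g i) = 0 := by
  -- Extract block equations from the symplectic condition
  rw [Matrix.fromBlocks_transpose, Matrix.fromBlocks_multiply, Matrix.fromBlocks_multiply]
    at hsymp
  have h21 := congrArg Matrix.toBlocks₂₁ hsymp
  have h22 := congrArg Matrix.toBlocks₂₂ hsymp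
  simp [Matrix.toBlocks_fromBlocks₂₁, Matrix.toBlocks_fromBlocks₂₂] at h21 h22
  have e21 : Bᵀ * C - Dᵀ * A = -1 := by linear_combination (norm := noncomm_ring) h21
  have e22 : Bᵀ * D = Dᵀ * B := by linear_combination (norm := noncomm_ring) h22
  have hBB : B * B⁻¹ = 1 := Matrix.mul_nonsing_inv B hB
  have hBB' : B⁻¹ * B = 1 := Matrix.nonsing_inv_mul B hB
  -- Key identity : (B⁻¹)ᵀ = D * B⁻¹ * A - C
  have key : B⁻¹ᵀ = D * B⁻¹ * A - C := by
    have h1 : Bᵀ * (D * B⁻¹ * A - C) = 1 := by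
      have : Bᵀ * (D * B⁻¹ * A) = Dᵀ * A := by
        calc Bᵀ * (D * B⁻¹ * A) = (Bᵀ * D) * B⁻¹ * A := by noncomm_ring
        _ = Dᵀ * (B * B⁻¹) * A := by rw [e22]; noncomm_ring
        _ = Dᵀ * A := by rw [hBB]; noncomm_ring
      calc Bᵀ * (D * B⁻¹ * A - C) = Bᵀ * (D * B⁻¹ * A) - Bᵀ * C := by noncomm_ring
      _ = Dᵀ * A - Bᵀ * C := by rw [this]
      _ = 1 := by linear_combination (norm := noncomm_ring) - e21
    rw [Matrix.transpose_nonsing_inv]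
    exact Matrix.inv_eq_right_inv h1
  set F : Fin (N + 1) → ℚ := f - g with hF
  set F'' : Fin (N + 1) → ℚ := f'' - g'' with hF''
  -- A F + B F'' = 0
  have hAB : A.mulVec F + B.mulVec F'' = 0 := by
    have := sub_eq_zero_of_eq (hf.trans hg.symm)
    rw [← this]
    simp [hF, hF'', Matrix.mulVec_sub]
    abel
  have hF''eq : F'' = -(B⁻¹.mulVec (A.mulVec F)) := by
    have h2 : B.mulVec F'' = -(A.mulVec F) := eq_neg_of_add_eq_zero_right hAB
    have := congrArg (fun v => B⁻¹.mulVec v) h2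
    simpa [Matrix.mulVec_mulVec, hBB', Matrix.mulVec_neg] using this
  -- last-row condition
  have hlast : (C.mulVec F + D.mulVec F'') (Fin.last N) = 0 := by
    simp only [Pi.add_apply, Matrix.mulVec, dotProduct, hF, hF'', Pi.sub_apply]
    have : (∑ i, C (Fin.last N) i * (f i - g i)) + ∑ i, D (Fin.last N) i * (f'' i - g'' i)
        = ((∑ i, C (Fin.last N) i * f i) + ∑ i, D (Fin.last N) i * f'' i)
          - ((∑ i, C (Fin.last N) i * g i) + ∑ i, D (Fin.last N) i * g'' i) := by
      simp [mul_sub, Finset.sum_sub_distrib]; ring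
    rw [this, hfl, hgl, sub_self]
  -- Rewrite the goal as a dot product
  have hgoal : ∑ i, (B⁻¹.mulVec u) i * F i = u ⬝ᵥ (B⁻¹ᵀ.mulVec F) := by
    rw [Matrix.dotProduct_mulVec, Matrix.vecMul_transpose]
    rfl
  have hsum : ∑ i, (B⁻¹.mulVec u) i * (f i - g i) = u ⬝ᵥ (B⁻¹ᵀ.mulVec F) := hgoal
  rw [hsum]
  have hdot : u ⬝ᵥ (B⁻¹ᵀ.mulVec F) = u (Fin.last N) * (B⁻¹ᵀ.mulVec F) (Fin.last N) := by
    rw [dotProduct]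
    exact Finset.sum_eq_single (Fin.last N)
      (fun i _ hi => by rw [hu i hi, zero_mul]) (fun h => absurd (Finset.mem_univ _) h)
  rw [hdot]
  have hzero : (B⁻¹ᵀ.mulVec F) (Fin.last N) = 0 := by
    rw [key]
    have : (D * B⁻¹ * A - C).mulVec F = -(C.mulVec F + D.mulVec F'') := by
      rw [hF''eq]
      simp [Matrix.sub_mulVec, ← Matrix.mulVec_mulVec, Matrix.mulVec_neg]
      abel
    rw [this, Pi.neg_apply, hlast, neg_zero]
  rw [hzero, mul_zero]
end
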